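/- arXiv:cs/0503089 — 2 statements merged into one kernel-verified Lean document; each statement's English description precedes it below -/
import Mathlib

section
/- Let p̄ = (p_n) be a general source and let F : ℝ → [0,1] be a nondecreasing function such that for every x ∈ ℝ, lim_{n→∞} p_n{−(1/n) log p_n(ω) < x} = F(x). Suppose a ∈ ℝ and ε ∈ (0,1) satisfy lim_{n→∞} p_n{−(1/n) log p_n(ω) < a} = 1 − ε. Then there exists a sequence of codes Φ_n = (M_n, φ_n, ψ_n) such that lim_n (1/n) log M_n = a, lim_n ε(Φ_n) = ε, and lim_{n→∞} (1/n) D(p_n∘φ_n⁻¹ ‖ u_{M_n}) = ∫_{[0,a]} (a − x) dμ_F(x), where μ_F is the Lebesgue–Stieltjes measure associated with F. -/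
open Filter

noncomputable section

/-- The probability of a set `S` under a probability mass function `p`. -/
def prob {Ω : Type*} (p : Ω → ℝ) (S : Set Ω) : ℝ := ∑' ω : S, p ω

/-- Push-forward of `p` under `φ : Ω → Fin M`. -/
def push {Ω : Type*} {M : ℕ} (p : Ω → ℝ) (φ : Ω → Fin M) : Fin M → ℝ :=
  fun i => prob p {ω | φ ω = i}

/-- The uniform distribution on `Fin M`. -/
def unif (M : ℕ) : Fin M → ℝ := fun _ => 1 / (M : ℝ)

/-- Kullback–Leibler divergence between two distributions on `Fin M`. -/
def KL {M : ℕ} (q r : Fin M → ℝ) : ℝ := ∑ i, q i * Real.log (q i / r i)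



section ProbLemmas
variable {Ωt : Type*} {p : Ωt → ℝ}

lemma prob_eq_ind (p : Ωt → ℝ) (S : Set Ωt) : prob p S = ∑' ω, S.indicator p ω :=
  tsum_subtype S p

lemma prob_nonneg (hp : ∀ ω, 0 ≤ p ω) (S : Set Ωt) : 0 ≤ prob p S :=
  tsum_nonneg fun ω => hp ω

lemma prob_le_tsum (hp : ∀ ω, 0 ≤ p ω) (hs : Summable p) (S : Set Ωt) :
    prob p S ≤ ∑' ω, p ω := by
  rw [prob_eq_ind]
  exact Summable.tsum_le_tsum (fun ω => Set.indicator_le_self' (fun x _ => hp x) ω)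
    (hs.indicator S) hs

lemma prob_le_one (hp : ∀ ω, 0 ≤ p ω) (hs : HasSum p 1) (S : Set Ωt) :
    prob p S ≤ 1 := by
  have := prob_le_tsum hp hs.summable S
  rwa [hs.tsum_eq] at this

lemma prob_mono (hp : ∀ ω, 0 ≤ p ω) (hs : Summable p) {S T : Set Ωt} (h : S ⊆ T) :
    prob p S ≤ prob p T := by
  rw [prob_eq_ind, prob_eq_ind]
  exact Summable.tsum_le_tsum (fun ω => Set.indicator_le_indicator_of_subset h (fun x => hp x) ω)
    (hs.indicator S) (hs.indicator T)

lemma prob_compl (hs : HasSum p 1) (S : Set Ωt) : prob p Sᶜ = 1 - prob p S := by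
  have h := Summable.tsum_add_tsum_compl (f := p) (s := S) (hs.summable.subtype S)
    (hs.summable.subtype Sᶜ)
  rw [hs.tsum_eq] at h
  unfold prob
  linarith

lemma prob_singleton (p : Ωt → ℝ) (x : Ωt) : prob p {x} = p x := tsum_singleton x p

lemma prob_empty (p : Ωt → ℝ) : prob p (∅ : Set Ωt) = 0 := by
  simp [prob]

lemma prob_zero_of_zeros {S : Set Ωt} (h : ∀ ω ∈ S, p ω = 0) : prob p S = 0 := by
  rw [prob_eq_ind]
  convert tsum_zero with ω
  by_cases hω : ω ∈ S
  · simp [Set.indicator_of_mem hω, h ω hω]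
  · simp [Set.indicator_of_notMem hω]

lemma prob_congr_zero (hs : Summable p) {S T : Set Ωt} (hST : S ⊆ T)
    (h : ∀ ω ∈ T \ S, p ω = 0) : prob p T = prob p S := by
  have hdisj : Disjoint S (T \ S) := Set.disjoint_sdiff_right.mono_left le_rfl
  have hunion : T = S ∪ (T \ S) := by
    rw [Set.union_diff_cancel hST]
  rw [hunion, prob_eq_ind, prob_eq_ind]
  have : ∀ ω, (S ∪ (T \ S)).indicator p ω = S.indicator p ω + (T \ S).indicator p ω := by
    intro ω; rw [Set.indicator_union_of_disjoint hdisj]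
  rw [tsum_congr this, Summable.tsum_add (hs.indicator S) (hs.indicator (T \ S))]
  have h0 : ∑' ω, (T \ S).indicator p ω = 0 := by
    rw [← prob_eq_ind]; exact prob_zero_of_zeros h
  rw [h0, add_zero]

lemma prob_union_disjoint (hs : Summable p) {S T : Set Ωt} (h : Disjoint S T) :
    prob p (S ∪ T) = prob p S + prob p T := by
  rw [prob_eq_ind, prob_eq_ind, prob_eq_ind,
    tsum_congr (fun ω => by rw [Set.indicator_union_of_disjoint h] :
      ∀ ω, (S ∪ T).indicator p ω = S.indicator p ω + T.indicator p ω),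
    Summable.tsum_add (hs.indicator S) (hs.indicator T)]

lemma prob_finset (p : Ωt → ℝ) (T : Finset Ωt) : prob p (T : Set Ωt) = ∑ ω ∈ T, p ω := by
  rw [prob]; exact T.tsum_subtype p

/-- finitely many pairwise disjoint sets have total probability at most 1 -/
lemma sum_prob_le_one (hp : ∀ ω, 0 ≤ p ω) (hs : HasSum p 1) {K : ℕ} (S : Fin K → Set Ωt)
    (hdis : ∀ i j, i ≠ j → Disjoint (S i) (S j)) :
    ∑ j, prob p (S j) ≤ 1 := by
  have key : ∑ j, prob p (S j) = ∑' ω, ∑ j, (S j).indicator p ω := by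
    simp_rw [prob_eq_ind]
    exact (Summable.tsum_finsetSum (fun j _ => hs.summable.indicator (S j))).symm
  rw [key]
  have hle : ∀ ω, ∑ j, (S j).indicator p ω ≤ p ω := by
    intro ω
    by_cases h : ∃ j, ω ∈ S j
    · obtain ⟨j₀, hj₀⟩ := h
      rw [Finset.sum_eq_single_of_mem j₀ (Finset.mem_univ _)]
      · simp [Set.indicator_of_mem hj₀]
      · intro j _ hj
        have : ω ∉ S j := fun hmem => (hdis j j₀ hj).ne_of_mem hmem hj₀ rfl
        simp [Set.indicator_of_notMem this]
    · push_neg at h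
      simp only [Set.indicator_of_notMem (h _)]
      simp [hp ω]
  calc ∑' ω, ∑ j, (S j).indicator p ω ≤ ∑' ω, p ω := by
        refine Summable.tsum_le_tsum hle ?_ hs.summable
        exact summable_sum (fun j _ => Summable.indicator hs.summable (S j))
    _ = 1 := hs.tsum_eq

end ProbLemmas

lemma Gfinite {Ωt : Type*} {p : Ωt → ℝ} (hs : Summable p) {γ : ℝ} (hγ : 0 < γ) :
    {ω | γ < p ω}.Finite := by
  have h1 : ∀ᶠ ω in Filter.cofinite, p ω < γ :=
    hs.tendsto_cofinite_zero.eventually (gt_mem_nhds hγ)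
  rw [Filter.eventually_cofinite] at h1
  exact h1.subset (fun ω hω => not_lt.2 (le_of_lt hω))

lemma xlt_of_gt {pω : ℝ} {n : ℕ} {a : ℝ} (hn : 1 ≤ n)
    (h : Real.exp (-(n:ℝ) * a) < pω) : -(1 / (n : ℝ)) * Real.log pω < a := by
  have hn0 : (0:ℝ) < (n:ℝ) := by exact_mod_cast hn
  have hγ0 : 0 < Real.exp (-(n:ℝ) * a) := Real.exp_pos _
  have hlog : -(n:ℝ) * a < Real.log pω := by
    have := Real.log_lt_log hγ0 h
    rwa [Real.log_exp] at this
  have h2 : -Real.log pω < (n:ℝ) * a := by linarith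
  have ht : 0 < 1 / (n:ℝ) := by positivity
  have h3 : (1/(n:ℝ)) * (-Real.log pω) < (1/(n:ℝ)) * ((n:ℝ) * a) :=
    mul_lt_mul_of_pos_left h2 ht
  have h4 : (1/(n:ℝ)) * ((n:ℝ) * a) = a := by field_simp
  calc -(1 / (n : ℝ)) * Real.log pω = (1/(n:ℝ)) * (-Real.log pω) := by ring
    _ < a := by rw [h4] at h3; exact h3

lemma eq_zero_of_xlt {pω : ℝ} {n : ℕ} {a : ℝ} (hn : 1 ≤ n) (hp0 : 0 ≤ pω)
    (hle : pω ≤ Real.exp (-(n:ℝ) * a)) (h : -(1 / (n : ℝ)) * Real.log pω < a) :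
    pω = 0 := by
  have hn0 : (0:ℝ) < (n:ℝ) := by exact_mod_cast hn
  by_contra hne
  have hpos : 0 < pω := lt_of_le_of_ne hp0 (Ne.symm hne)
  have hlog : Real.log pω ≤ -(n:ℝ) * a := by
    have := Real.log_le_log hpos hle
    rwa [Real.log_exp] at this
  have h2 : (n:ℝ) * a ≤ -Real.log pω := by linarith
  have ht : 0 < 1 / (n:ℝ) := by positivity
  have h3 : (1/(n:ℝ)) * ((n:ℝ) * a) ≤ (1/(n:ℝ)) * (-Real.log pω) :=
    mul_le_mul_of_nonneg_left h2 (le_of_lt ht)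
  have h4 : (1/(n:ℝ)) * ((n:ℝ) * a) = a := by field_simp
  have h5 : a ≤ -(1 / (n : ℝ)) * Real.log pω := by
    rw [h4] at h3
    calc a ≤ (1/(n:ℝ)) * (-Real.log pω) := h3
      _ = -(1 / (n : ℝ)) * Real.log pω := by ring
  linarith

section Spread
variable {Ωt : Type*} [Countable Ωt] {p : Ωt → ℝ}

/-- The mass of a set is at least any finite subfamily's sum. -/
lemma finset_sum_le_prob (hp : ∀ ω, 0 ≤ p ω) (hs : Summable p) {S : Set Ωt}
    (T : Finset Ωt) (hT : ∀ ω ∈ T, ω ∈ S) : ∑ ω ∈ T, p ω ≤ prob p S := by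
  rw [← prob_finset]
  exact prob_mono hp hs (fun ω hω => hT ω (by exact_mod_cast hω))

/-- Greedy spreading: any set `B` with individual masses `≤ δ` can be split into
`K` classes each of mass at most `prob p B / K + δ`. -/
lemma spread (hp : ∀ ω, 0 ≤ p ω) (hs : Summable p) (B : Set Ωt) {δ : ℝ} (hδ0 : 0 ≤ δ)
    (hδ : ∀ ω ∈ B, p ω ≤ δ) (K : ℕ) (hK : 0 < K) :
    ∃ idx : Ωt → Fin K, ∀ j, prob p {ω | ω ∈ B ∧ idx ω = j} ≤ prob p B / K + δ := by
  classical
  set q := prob p B with hq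
  have hq0 : 0 ≤ q := prob_nonneg hp B
  rcases eq_or_lt_of_le hq0 with hq0' | hqpos
  · -- q = 0 : all masses in B vanish
    have hz : ∀ ω ∈ B, p ω = 0 := by
      intro ω hω
      have h1 : p ω ≤ prob p B := by
        have := finset_sum_le_prob hp hs {ω} (by simpa using hω)
        simpa using this
      have h2 := hp ω
      have h3 : (0:ℝ) = prob p B := hq0'.trans hq
      linarith
    refine ⟨fun _ => ⟨0, hK⟩, fun j => ?_⟩
    have : prob p {ω | ω ∈ B ∧ (fun _ => (⟨0, hK⟩ : Fin K)) ω = j} = 0 :=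
      prob_zero_of_zeros (fun ω hω => hz ω hω.1)
    rw [this]
    have h4 : (0:ℝ) ≤ prob p B / K := div_nonneg (prob_nonneg hp B) (Nat.cast_nonneg K)
    linarith
  · -- main case q > 0
    obtain ⟨ι, hι⟩ := exists_injective_nat Ωt
    set c := q / K with hc
    have hc0 : 0 < c := div_pos hqpos (by exact_mod_cast hK)
    set s : Ωt → ℝ := fun ω => prob p {ω' | ω' ∈ B ∧ ι ω' < ι ω} with hsdef
    have hs_nonneg : ∀ ω, 0 ≤ s ω := fun ω => prob_nonneg hp _
    have hs_le_q : ∀ ω, s ω ≤ q := fun ω =>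
      prob_mono hp hs (fun ω' hω' => hω'.1)
    set idx : Ωt → Fin K := fun ω => ⟨min (K - 1) ⌊s ω / c⌋₊, by
      have : min (K - 1) ⌊s ω / c⌋₊ ≤ K - 1 := min_le_left _ _
      omega⟩ with hidxdef
    refine ⟨idx, fun j => ?_⟩
    -- basic facts about classes
    have hlow : ∀ ω, idx ω = j → (j : ℝ) * c ≤ s ω := by
      intro ω hω
      have h1 : (j : ℕ) ≤ ⌊s ω / c⌋₊ := by
        have : min (K - 1) ⌊s ω / c⌋₊ = (j : ℕ) := by rw [← hω]
        omega
      have h2 : (j : ℝ) ≤ s ω / c := by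
        calc (j : ℝ) ≤ (⌊s ω / c⌋₊ : ℝ) := by exact_mod_cast h1
          _ ≤ s ω / c := Nat.floor_le (div_nonneg (hs_nonneg ω) (le_of_lt hc0))
      calc (j : ℝ) * c ≤ (s ω / c) * c := by nlinarith
        _ = s ω := by field_simp
    have hhigh : ∀ ω, idx ω = j → s ω ≤ ((j : ℝ) + 1) * c := by
      intro ω hω
      by_cases hcase : ⌊s ω / c⌋₊ ≤ K - 1
      · have hj : (j : ℕ) = ⌊s ω / c⌋₊ := by
          have : min (K - 1) ⌊s ω / c⌋₊ = (j : ℕ) := by rw [← hω]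
          omega
        have h2 : s ω / c < (j : ℝ) + 1 := by
          have := Nat.lt_floor_add_one (s ω / c)
          rw [← hj] at this
          exact_mod_cast this
        exact le_of_lt ((div_lt_iff₀ hc0).1 h2)
      · -- j = K - 1, use s ≤ q = K * c
        have hj : (j : ℕ) = K - 1 := by
          have : min (K - 1) ⌊s ω / c⌋₊ = (j : ℕ) := by rw [← hω]
          omega
        have hKc : (K : ℝ) * c = q := by
          rw [hc]; field_simp
        have : ((j : ℝ) + 1) * c = (K : ℝ) * c := by
          have : ((j : ℕ) + 1 : ℝ) = (K : ℝ) := by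
            rw [hj]
            have : K - 1 + 1 = K := by omega
            exact_mod_cast congrArg (Nat.cast : ℕ → ℝ) this
          push_cast at this ⊢
          nlinarith
        rw [this, hKc]
        exact hs_le_q ω
    -- bound every finite partial sum of the class by c + δ
    have key : ∀ T : Finset Ωt, (∀ ω ∈ T, ω ∈ B ∧ idx ω = j) → ∑ ω ∈ T, p ω ≤ c + δ := by
      intro T hT
      rcases T.eq_empty_or_nonempty with rfl | hTne
      · simp; positivity
      · obtain ⟨bmax, hbmaxT, hbmax⟩ := T.exists_max_image (fun ω => ι ω) hTne
        obtain ⟨bmin, hbminT, hbmin⟩ := T.exists_min_image (fun ω => ι ω) hTne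
        -- T.erase bmax ∪ {ι < ι bmin} ⊆ {ι < ι bmax}
        have h1 : ∑ ω ∈ T.erase bmax, p ω + s bmin ≤ s bmax := by
          have hsub : ((T.erase bmax : Finset Ωt) : Set Ωt) ∪ {ω' | ω' ∈ B ∧ ι ω' < ι bmin}
              ⊆ {ω' | ω' ∈ B ∧ ι ω' < ι bmax} := by
            rintro ω (hω | hω)
            · have hωT := Finset.mem_of_mem_erase (by exact_mod_cast hω)
              have hne : ω ≠ bmax := Finset.ne_of_mem_erase (by exact_mod_cast hω)
              refine ⟨(hT ω hωT).1, ?_⟩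
              have := hbmax ω hωT
              exact lt_of_le_of_ne this (fun h => hne (hι h))
            · exact ⟨hω.1, lt_of_lt_of_le hω.2 (hbmin bmax hbmaxT)⟩
          have hdisj : Disjoint ((T.erase bmax : Finset Ωt) : Set Ωt)
              {ω' | ω' ∈ B ∧ ι ω' < ι bmin} := by
            rw [Set.disjoint_left]
            rintro ω hω ⟨_, hlt⟩
            have hωT := Finset.mem_of_mem_erase (by exact_mod_cast hω)
            exact absurd hlt (not_lt.2 (hbmin ω hωT))
          calc ∑ ω ∈ T.erase bmax, p ω + s bmin
              = prob p (((T.erase bmax : Finset Ωt) : Set Ωt) ∪ {ω' | ω' ∈ B ∧ ι ω' < ι bmin}) := by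
                rw [prob_union_disjoint hs hdisj, prob_finset]
            _ ≤ s bmax := prob_mono hp hs hsub
        have h2 : ∑ ω ∈ T, p ω = p bmax + ∑ ω ∈ T.erase bmax, p ω :=
          (Finset.add_sum_erase T p hbmaxT).symm
        have h3 : p bmax ≤ δ := hδ bmax (hT bmax hbmaxT).1
        have h4 : (j : ℝ) * c ≤ s bmin := hlow bmin (hT bmin hbminT).2
        have h5 : s bmax ≤ ((j : ℝ) + 1) * c := hhigh bmax (hT bmax hbmaxT).2
        have : ∑ ω ∈ T.erase bmax, p ω ≤ c := by nlinarith
        linarith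
    -- conclude via tsum_le_of_sum_le
    have hsummable : Summable (fun ω : {ω | ω ∈ B ∧ idx ω = j} => p ω) := hs.subtype _
    show prob p {ω | ω ∈ B ∧ idx ω = j} ≤ c + δ
    unfold prob
    refine Summable.tsum_le_of_sum_le hsummable ?_
    intro T
    have := key (T.image Subtype.val) (by
      intro ω hω
      obtain ⟨⟨ω', hω'⟩, _, rfl⟩ := Finset.mem_image.1 hω
      exact hω')
    rw [Finset.sum_image (by exact fun x _ y _ h => Subtype.val_injective h)] at this
    exact this
end Spread



lemma neg_one_le_mul_log {t : ℝ} (ht : 0 ≤ t) : -1 ≤ t * Real.log t := by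
  rcases eq_or_lt_of_le ht with rfl | ht'
  · simp
  · have h1 : Real.log (1 / t) ≤ 1 / t - 1 := Real.log_le_sub_one_of_pos (by positivity)
    rw [Real.log_div one_ne_zero (ne_of_gt ht'), Real.log_one] at h1
    have h2 : -Real.log t ≤ 1 / t - 1 := by linarith
    have h3 : t * (-Real.log t) ≤ t * (1 / t - 1) := by
      exact mul_le_mul_of_nonneg_left h2 ht
    have h4 : t * (1 / t - 1) = 1 - t := by field_simp
    nlinarith

lemma code_exists {Ωt : Type} [Countable Ωt] (p : Ωt → ℝ) (hp : ∀ ω, 0 ≤ p ω)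
    (hs : HasSum p 1) (γ : ℝ) (hγ0 : 0 < γ) (K : ℕ) (hK : 0 < K)
    (hKγ1 : 1 ≤ (K : ℝ) * γ) (hKγ2 : (K : ℝ) * γ ≤ 2) :
    ∃ (φ : Ωt → Fin (K + K)) (ψ : Fin (K + K) → Ωt),
      (({ω | γ < p ω}).Nonempty → {ω | ψ (φ ω) ≠ ω} = {ω | γ < p ω}ᶜ) ∧
      |KL (push p φ) (unif (K + K)) -
        ∑' g : {ω | γ < p ω}, p g * Real.log (p g * ((K + K : ℕ) : ℝ))| ≤ Real.log 6 + 1 := by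
  classical
  haveI hne : Nonempty Ωt := by
    by_contra h
    rw [not_nonempty_iff] at h
    have h1 := hs.tsum_eq
    rw [tsum_empty] at h1
    norm_num at h1
  set G : Set Ωt := {ω | γ < p ω} with hGdef
  -- G is finite
  have hGfin : G.Finite := by
    have h1 : ∀ᶠ ω in Filter.cofinite, p ω < γ :=
      hs.summable.tendsto_cofinite_zero.eventually (gt_mem_nhds hγ0)
    rw [Filter.eventually_cofinite] at h1
    exact h1.subset (fun ω hω => not_lt.2 (le_of_lt hω))
  haveI hGfint : Fintype ↥G := hGfin.fintype
  -- cardinality bound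
  have hcard : Fintype.card ↥G ≤ K := by
    have h1 : (Fintype.card ↥G : ℝ) * γ ≤ 1 := by
      have h2 : ∀ g ∈ (Finset.univ : Finset ↥G), γ ≤ p g := fun g _ => le_of_lt g.2
      have h3 := Finset.card_nsmul_le_sum Finset.univ (fun g : ↥G => p g) γ h2
      rw [Finset.card_univ, nsmul_eq_mul] at h3
      have h4 : ∑ g : ↥G, p ↑g = prob p G := (tsum_fintype _).symm
      have h5 : prob p G ≤ 1 := prob_le_one hp hs G
      calc (Fintype.card ↥G : ℝ) * γ ≤ ∑ g : ↥G, p ↑g := by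
            convert h3 using 2
        _ ≤ 1 := h4 ▸ h5
    by_contra hcon
    push_neg at hcon
    have h6 : ((K : ℝ) + 1) * γ ≤ (Fintype.card ↥G : ℝ) * γ := by
      have : (K : ℝ) + 1 ≤ (Fintype.card ↥G : ℝ) := by exact_mod_cast hcon
      nlinarith
    nlinarith
  obtain ⟨e⟩ : Nonempty (↥G ↪ Fin K) :=
    Function.Embedding.nonempty_of_card_le (by simpa using hcard)
  -- spread the bad mass
  obtain ⟨idx, hidx⟩ := spread hp hs.summable Gᶜ (le_of_lt hγ0)
    (fun ω hω => not_lt.1 hω) K hK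
  set ω₀ : Ωt := if h : G.Nonempty then h.choose else Classical.arbitrary Ωt with hω₀def
  have hω₀ : G.Nonempty → ω₀ ∈ G := by
    intro h
    rw [hω₀def, dif_pos h]
    exact h.choose_spec
  set φ : Ωt → Fin (K + K) :=
    fun ω => if h : ω ∈ G then Fin.castAdd K (e ⟨ω, h⟩) else Fin.natAdd K (idx ω) with hφdef
  set ψ : Fin (K + K) → Ωt :=
    fun i => if h : ∃ g : ↥G, Fin.castAdd K (e g) = i then (h.choose : ↥G).val else ω₀
    with hψdef
  have hcastne : ∀ (g : Fin K) (j : Fin K), Fin.castAdd K g ≠ Fin.natAdd K j := by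
    intro g j h
    have := congrArg Fin.val h
    simp only [Fin.coe_castAdd, Fin.coe_natAdd] at this
    omega
  have hcastinj : Function.Injective (Fin.castAdd (n := K) K) := by
    intro i j h
    have := congrArg Fin.val h
    simpa [Fin.coe_castAdd, Fin.ext_iff] using this
  have hψφ_good : ∀ ω (h : ω ∈ G), ψ (φ ω) = ω := by
    intro ω h
    have hφω : φ ω = Fin.castAdd K (e ⟨ω, h⟩) := by simp only [hφdef]; exact dif_pos h
    rw [hφω]
    have hex : ∃ g : ↥G, Fin.castAdd K (e g) = Fin.castAdd K (e ⟨ω, h⟩) := ⟨⟨ω, h⟩, rfl⟩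
    simp only [hψdef, dif_pos hex]
    have hspec := hex.choose_spec
    have : hex.choose = ⟨ω, h⟩ := e.injective (hcastinj hspec)
    rw [this]
  have hψφ_bad : ∀ ω, ω ∉ G → ψ (φ ω) = ω₀ := by
    intro ω h
    have hφω : φ ω = Fin.natAdd K (idx ω) := by simp only [hφdef]; exact dif_neg h
    rw [hφω]
    have hnex : ¬∃ g : ↥G, Fin.castAdd K (e g) = Fin.natAdd K (idx ω) := by
      rintro ⟨g, hg⟩
      exact hcastne _ _ hg
    simp only [hψdef, dif_neg hnex]
  refine ⟨φ, ψ, ?_, ?_⟩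
  · -- error set
    intro hGne
    ext ω
    simp only [Set.mem_setOf_eq, Set.mem_compl_iff]
    by_cases h : ω ∈ G
    · simp only [hψφ_good ω h, hGdef]
      change γ < p ω at h
      tauto
    · have h1 := hψφ_bad ω h
      have h2 : ω₀ ≠ ω := by
        intro hc
        exact h (hc ▸ hω₀ hGne)
      simp only [h1]
      tauto
  · -- KL bound
    -- push values
    have hpush_good : ∀ g : ↥G, push p φ (Fin.castAdd K (e g)) = p ↑g := by
      intro g
      have hset : {ω | φ ω = Fin.castAdd K (e g)} = {(g : Ωt)} := by
        ext ω
        simp only [Set.mem_setOf_eq, Set.mem_singleton_iff]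
        constructor
        · intro hω
          by_cases h : ω ∈ G
          · rw [hφdef] at hω
            simp only [dif_pos h] at hω
            have := e.injective (hcastinj hω)
            exact congrArg Subtype.val this
          · rw [hφdef] at hω
            simp only [dif_neg h] at hω
            exact absurd hω.symm (hcastne _ _)
        · rintro rfl
          have h : (g : Ωt) ∈ G := g.2
          simp only [hφdef, dif_pos h]
      rw [push, hset, prob_singleton]
    have hpush_good0 : ∀ i : Fin K, i ∉ Set.range e → push p φ (Fin.castAdd K i) = 0 := by
      intro i hi
      have hset : {ω | φ ω = Fin.castAdd K i} = (∅ : Set Ωt) := by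
        ext ω
        simp only [Set.mem_setOf_eq, Set.mem_empty_iff_false, iff_false]
        intro hω
        by_cases h : ω ∈ G
        · rw [hφdef] at hω
          simp only [dif_pos h] at hω
          exact hi ⟨⟨ω, h⟩, hcastinj hω⟩
        · rw [hφdef] at hω
          simp only [dif_neg h] at hω
          exact absurd hω.symm (hcastne _ _)
      rw [push, hset, prob_empty]
    have hpush_bad : ∀ j : Fin K, push p φ (Fin.natAdd K j) =
        prob p {ω | ω ∈ Gᶜ ∧ idx ω = j} := by
      intro j
      have hset : {ω | φ ω = Fin.natAdd K j} = {ω | ω ∈ Gᶜ ∧ idx ω = j} := by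
        ext ω
        simp only [Set.mem_setOf_eq, Set.mem_compl_iff]
        by_cases h : ω ∈ G
        · simp only [hφdef, dif_pos h]
          constructor
          · intro hω; exact absurd hω (hcastne _ _)
          · intro hω; exact absurd h hω.1
        · simp only [hφdef, dif_neg h]
          constructor
          · intro hω
            refine ⟨h, ?_⟩
            have := congrArg Fin.val hω
            simp only [Fin.coe_natAdd] at this
            exact Fin.ext (by omega)
          · rintro ⟨-, rfl⟩
            rfl
      rw [push, hset]
    -- rewrite KL as a sum with log (x * M)
    set M' : ℝ := ((K + K : ℕ) : ℝ) with hM'def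
    have hM'pos : 0 < M' := by
      rw [hM'def]
      have : 0 < K + K := by omega
      exact_mod_cast this
    have hKL : KL (push p φ) (unif (K + K)) =
        ∑ i, push p φ i * Real.log (push p φ i * M') := by
      rw [KL]
      refine Finset.sum_congr rfl (fun i _ => ?_)
      congr 2
      rw [unif]
      rw [div_div_eq_mul_div, div_one]
    rw [hKL, Fin.sum_univ_add]
    -- good part
    have hgood : (∑ i : Fin K, push p φ (Fin.castAdd K i) *
        Real.log (push p φ (Fin.castAdd K i) * M')) =
        ∑' g : ↥G, p ↑g * Real.log (p ↑g * M') := by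
      rw [tsum_fintype]
      calc ∑ i : Fin K, push p φ (Fin.castAdd K i) *
            Real.log (push p φ (Fin.castAdd K i) * M')
          = ∑ i ∈ Finset.univ.image e, push p φ (Fin.castAdd K i) *
            Real.log (push p φ (Fin.castAdd K i) * M') := by
            refine (Finset.sum_subset (Finset.subset_univ _) ?_).symm
            intro i _ hi
            have : i ∉ Set.range e := by
              intro ⟨g, hg⟩
              exact hi (Finset.mem_image.2 ⟨g, Finset.mem_univ g, hg⟩)
            rw [hpush_good0 i this, zero_mul]
        _ = ∑ g : ↥G, push p φ (Fin.castAdd K (e g)) *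
            Real.log (push p φ (Fin.castAdd K (e g)) * M') :=
            Finset.sum_image (fun x _ y _ h => e.injective h)
        _ = ∑ g : ↥G, p ↑g * Real.log (p ↑g * M') := by
            refine Finset.sum_congr rfl (fun g _ => ?_)
            rw [hpush_good g]
    rw [hgood, add_sub_cancel_left]
    -- bad part bound
    set L : Fin K → ℝ := fun j => prob p {ω | ω ∈ Gᶜ ∧ idx ω = j} with hLdef
    have hbadsum : (∑ j : Fin K, push p φ (Fin.natAdd K j) *
        Real.log (push p φ (Fin.natAdd K j) * M')) =
        ∑ j : Fin K, L j * Real.log (L j * M') := by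
      refine Finset.sum_congr rfl (fun j _ => ?_)
      rw [hpush_bad j]
    rw [hbadsum]
    have hKpos : (0 : ℝ) < K := by exact_mod_cast hK
    have hL0 : ∀ j, 0 ≤ L j := fun j => prob_nonneg hp _
    have hq1 : prob p Gᶜ ≤ 1 := prob_le_one hp hs _
    have hLle : ∀ j, L j ≤ prob p Gᶜ / K + γ := fun j => hidx j
    have hM'eq : M' = (K : ℝ) + (K : ℝ) := by rw [hM'def]; push_cast; ring
    have hLM : ∀ j, L j * M' ≤ 6 := by
      intro j
      have h1 : prob p Gᶜ / K * K = prob p Gᶜ := div_mul_cancel₀ _ (ne_of_gt hKpos)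
      have h2 := hLle j
      have h3 := hL0 j
      have h4 : (0 : ℝ) ≤ prob p Gᶜ := prob_nonneg hp _
      rw [hM'eq]
      nlinarith
    have hlog6 : (0 : ℝ) ≤ Real.log 6 := Real.log_nonneg (by norm_num)
    have hupper : (∑ j : Fin K, L j * Real.log (L j * M')) ≤ Real.log 6 := by
      have hsumL : ∑ j, L j ≤ 1 := by
        refine sum_prob_le_one hp hs (fun j => {ω | ω ∈ Gᶜ ∧ idx ω = j}) ?_
        intro i j hij
        rw [Set.disjoint_left]
        rintro ω ⟨-, rfl⟩ ⟨-, h2⟩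
        exact hij h2
      calc (∑ j : Fin K, L j * Real.log (L j * M'))
          ≤ ∑ j : Fin K, L j * Real.log 6 := by
            refine Finset.sum_le_sum (fun j _ => ?_)
            refine mul_le_mul_of_nonneg_left ?_ (hL0 j)
            rcases eq_or_lt_of_le (mul_nonneg (hL0 j) (le_of_lt hM'pos)) with h | h
            · rw [← h, Real.log_zero]; exact hlog6
            · exact Real.log_le_log h (hLM j)
        _ = (∑ j : Fin K, L j) * Real.log 6 := by rw [Finset.sum_mul]
        _ ≤ 1 * Real.log 6 := mul_le_mul_of_nonneg_right hsumL hlog6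
        _ = Real.log 6 := one_mul _
    have hlower : (-1 : ℝ) ≤ ∑ j : Fin K, L j * Real.log (L j * M') := by
      have hterm : ∀ j : Fin K, -(1 / M') ≤ L j * Real.log (L j * M') := by
        intro j
        have h := neg_one_le_mul_log (mul_nonneg (hL0 j) (le_of_lt hM'pos))
        have heq : L j * Real.log (L j * M') = (L j * M') * Real.log (L j * M') / M' := by
          field_simp
        rw [heq]
        have h2 : (-1 : ℝ) / M' ≤ (L j * M') * Real.log (L j * M') / M' :=
          (div_le_div_iff_of_pos_right hM'pos).2 h
        calc -(1 / M') = (-1 : ℝ) / M' := by ring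
          _ ≤ _ := h2
      calc (-1 : ℝ) ≤ (K : ℝ) * (-(1 / M')) := by
            rw [hM'eq]
            rw [mul_neg, mul_one_div]
            have : (K : ℝ) / ((K : ℝ) + K) ≤ 1 := by
              rw [div_le_one (by linarith)]
              linarith
            linarith
        _ = ∑ _j : Fin K, -(1 / M') := by
            rw [Finset.sum_const, Finset.card_univ, Fintype.card_fin, nsmul_eq_mul]
        _ ≤ ∑ j : Fin K, L j * Real.log (L j * M') := Finset.sum_le_sum (fun j _ => hterm j)
    rw [abs_le]
    constructor <;> linarith

open MeasureTheory in
lemma stieltjes_eq {F : ℝ → ℝ} (hFmono : Monotone F) (hF01 : ∀ x, F x ∈ Set.Icc (0:ℝ) 1)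
    (hF0 : ∀ x ≤ (0:ℝ), F x = 0) {a : ℝ} (ha : 0 < a) :
    ∫ x in Set.Icc 0 a, (a - x) ∂(hFmono.stieltjesFunction.measure) =
      ∫ t in Set.Ioc 0 a, F t := by
  set μ := hFmono.stieltjesFunction.measure with hμdef
  haveI hfin1 : IsFiniteMeasure (μ.restrict (Set.Icc 0 a)) := by
    constructor
    rw [Measure.restrict_apply_univ]
    exact measure_Icc_lt_top
  haveI hfin2 : IsFiniteMeasure (volume.restrict (Set.Ioc 0 a)) := by
    constructor
    rw [Measure.restrict_apply_univ, Real.volume_Ioc]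
    exact ENNReal.ofReal_lt_top
  set f : ℝ → ℝ → ℝ := fun x t => if x < t then (1:ℝ) else 0 with hfdef
  have hmeas_set : MeasurableSet {q : ℝ × ℝ | q.1 < q.2} :=
    measurableSet_lt measurable_fst measurable_snd
  have hf_unc : Function.uncurry f = Set.indicator {q : ℝ × ℝ | q.1 < q.2} (fun _ => (1:ℝ)) := by
    funext q
    simp only [Function.uncurry, hfdef, Set.indicator_apply, Set.mem_setOf_eq]
  have hint : Integrable (Function.uncurry f)
      ((μ.restrict (Set.Icc 0 a)).prod (volume.restrict (Set.Ioc 0 a))) := by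
    rw [hf_unc]
    exact (integrable_const 1).indicator hmeas_set
  have hswap := MeasureTheory.integral_integral_swap hint
  have hL : ∫ x in Set.Icc 0 a, (∫ t in Set.Ioc 0 a, f x t) ∂μ
      = ∫ x in Set.Icc 0 a, (a - x) ∂μ := by
    refine setIntegral_congr_fun measurableSet_Icc (fun x hx => ?_)
    have h1 : (fun t => f x t) = Set.indicator (Set.Ioi x) (fun _ => (1:ℝ)) := by
      funext t
      simp only [hfdef, Set.indicator_apply, Set.mem_Ioi]
    rw [h1, MeasureTheory.integral_indicator_const (1:ℝ) measurableSet_Ioi,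
      measureReal_def, Measure.restrict_apply measurableSet_Ioi]
    have hxs : Set.Ioi x ∩ Set.Ioc 0 a = Set.Ioc x a := by
      ext t
      simp only [Set.mem_inter_iff, Set.mem_Ioi, Set.mem_Ioc]
      constructor
      · rintro ⟨h1', h2', h3'⟩; exact ⟨h1', h3'⟩
      · rintro ⟨h1', h2'⟩; exact ⟨h1', lt_of_le_of_lt hx.1 h1', h2'⟩
    rw [hxs, Real.volume_Ioc, smul_eq_mul, mul_one, ENNReal.toReal_ofReal (by linarith [hx.2])]
  rw [← hL, hswap]
  -- now identify the inner integral with F, almost everywhere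
  have hms : MeasurableSet (Set.Ioc (0:ℝ) a) := measurableSet_Ioc
  -- continuity points
  have hae : ∀ᵐ t ∂volume, ContinuousAt F t := by
    rw [MeasureTheory.ae_iff]
    exact (hFmono.countable_not_continuousAt).measure_zero _
  -- leftLim of the Stieltjes function at 0 is 0
  have hF'lt0 : ∀ x < (0:ℝ), hFmono.stieltjesFunction x = 0 := by
    intro x hx
    rw [hFmono.stieltjesFunction_eq]
    have hupper : Function.rightLim F x ≤ F (x/2) := hFmono.rightLim_le (by linarith)
    have hlower : F x ≤ Function.rightLim F x := hFmono.le_rightLim le_rfl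
    rw [hF0 x (le_of_lt hx)] at hlower
    rw [hF0 (x/2) (by linarith)] at hupper
    linarith
  have hll0 : Function.leftLim (⇑hFmono.stieltjesFunction) 0 = 0 := by
    refine leftLim_eq_of_tendsto ?_
    refine Filter.Tendsto.congr' ?_ tendsto_const_nhds
    filter_upwards [self_mem_nhdsWithin] with x hx
    exact (hF'lt0 x hx).symm
  have hllt : ∀ t : ℝ, ContinuousAt F t →
      Function.leftLim (⇑hFmono.stieltjesFunction) t = F t := by
    intro t hct
    refine leftLim_eq_of_tendsto ?_
    refine tendsto_of_tendsto_of_tendsto_of_le_of_le'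
      ((hct.tendsto).mono_left nhdsWithin_le_nhds) tendsto_const_nhds ?_ ?_
    · filter_upwards [self_mem_nhdsWithin] with u _
      rw [hFmono.stieltjesFunction_eq]
      exact hFmono.le_rightLim le_rfl
    · filter_upwards [self_mem_nhdsWithin] with u hu
      rw [hFmono.stieltjesFunction_eq]
      exact hFmono.rightLim_le hu
  refine MeasureTheory.integral_congr_ae ((MeasureTheory.ae_restrict_iff' hms).2 ?_)
  filter_upwards [hae] with t hct ht
  -- inner integral equals (μ (Ico 0 t)).toReal
  have h1 : (fun x => f x t) = Set.indicator (Set.Iio t) (fun _ => (1:ℝ)) := by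
    funext x
    simp only [hfdef, Set.indicator_apply, Set.mem_Iio]
  rw [h1, MeasureTheory.integral_indicator_const (1:ℝ) measurableSet_Iio,
    measureReal_def, Measure.restrict_apply measurableSet_Iio]
  have hset : Set.Iio t ∩ Set.Icc 0 a = Set.Ico 0 t := by
    ext x
    simp only [Set.mem_inter_iff, Set.mem_Iio, Set.mem_Icc, Set.mem_Ico]
    constructor
    · rintro ⟨h1', h2', h3'⟩; exact ⟨h2', h1'⟩
    · rintro ⟨h1', h2'⟩; exact ⟨h2', h1', le_trans (le_of_lt h2') ht.2⟩
  rw [hset, hμdef, StieltjesFunction.measure_Ico, hll0, hllt t hct, sub_zero,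
    ENNReal.toReal_ofReal (hF01 t).1, smul_eq_mul, mul_one]

open MeasureTheory in
lemma int_rep {Ωt : Type} [Countable Ωt] (p : Ωt → ℝ) (hp : ∀ ω, 0 ≤ p ω)
    (hs : HasSum p 1) {n : ℕ} (hn : 1 ≤ n) {a : ℝ} (ha : 0 < a) :
    ∫ t in Set.Ioc 0 a, prob p {ω | -(1 / (n : ℝ)) * Real.log (p ω) < t} =
      ∑' g : {ω | Real.exp (-(n : ℝ) * a) < p ω},
        p ↑g * (a - (-(1 / (n : ℝ)) * Real.log (p ↑g))) := by
  have hn0 : (0:ℝ) < (n:ℝ) := by exact_mod_cast hn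
  set γ : ℝ := Real.exp (-(n : ℝ) * a) with hγdef
  have hγ0 : 0 < γ := Real.exp_pos _
  set G : Set Ωt := {ω | γ < p ω} with hGdef
  set x : Ωt → ℝ := fun ω => -(1 / (n : ℝ)) * Real.log (p ω) with hxdef
  have hGfin : G.Finite := by
    have h1 : ∀ᶠ ω in Filter.cofinite, p ω < γ :=
      hs.summable.tendsto_cofinite_zero.eventually (gt_mem_nhds hγ0)
    rw [Filter.eventually_cofinite] at h1
    exact h1.subset (fun ω hω => not_lt.2 (le_of_lt hω))
  haveI : Fintype ↥G := hGfin.fintype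
  have hple1 : ∀ ω, p ω ≤ 1 := fun ω => le_hasSum hs ω (fun j _ => hp j)
  have hx_mem : ∀ ω ∈ G, 0 ≤ x ω ∧ x ω < a := by
    intro ω hω
    have hpos : 0 < p ω := lt_trans hγ0 hω
    have ht : 0 < 1 / (n:ℝ) := by positivity
    constructor
    · have hlog : Real.log (p ω) ≤ 0 := Real.log_nonpos (hp ω) (hple1 ω)
      rw [hxdef]
      nlinarith
    · have hlog : -(n:ℝ) * a < Real.log (p ω) := by
        have := Real.log_lt_log hγ0 hω
        rwa [hγdef, Real.log_exp] at this
      have h2 : -Real.log (p ω) < (n:ℝ) * a := by linarith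
      have h3 : (1/(n:ℝ)) * (-Real.log (p ω)) < (1/(n:ℝ)) * ((n:ℝ) * a) :=
        mul_lt_mul_of_pos_left h2 ht
      have h4 : (1/(n:ℝ)) * ((n:ℝ) * a) = a := by field_simp
      calc x ω = (1/(n:ℝ)) * (-Real.log (p ω)) := by rw [hxdef]; ring
        _ < a := by rw [h4] at h3; exact h3
  -- zero mass outside G among small-x points
  have hzero : ∀ t ∈ Set.Ioc (0:ℝ) a, ∀ ω, x ω < t → ω ∉ G → p ω = 0 := by
    intro t ht ω hxω hωG
    by_contra hne
    have hpos : 0 < p ω := lt_of_le_of_ne (hp ω) (Ne.symm hne)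
    have hle : p ω ≤ γ := not_lt.1 hωG
    have hlog : Real.log (p ω) ≤ -(n:ℝ) * a := by
      have := Real.log_le_log hpos hle
      rwa [hγdef, Real.log_exp] at this
    have h2 : (n:ℝ) * a ≤ -Real.log (p ω) := by linarith
    have ht' : 0 < 1 / (n:ℝ) := by positivity
    have h3 : (1/(n:ℝ)) * ((n:ℝ) * a) ≤ (1/(n:ℝ)) * (-Real.log (p ω)) :=
      mul_le_mul_of_nonneg_left h2 (le_of_lt ht')
    have h4 : (1/(n:ℝ)) * ((n:ℝ) * a) = a := by field_simp
    have h5 : a ≤ x ω := by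
      rw [h4] at h3
      calc a ≤ (1/(n:ℝ)) * (-Real.log (p ω)) := h3
        _ = x ω := by rw [hxdef]; ring
    have := ht.2
    linarith
  -- step 1 : pointwise identification of the integrand on (0, a]
  have hstep1 : ∀ t ∈ Set.Ioc (0:ℝ) a,
      prob p {ω | x ω < t} = ∑' g : ↥G, (if x ↑g < t then p ↑g else 0) := by
    intro t ht
    have hsub : {ω | ω ∈ G ∧ x ω < t} ⊆ {ω | x ω < t} := fun ω hω => hω.2
    have hcongr : prob p {ω | x ω < t} = prob p {ω | ω ∈ G ∧ x ω < t} :=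
      prob_congr_zero hs.summable hsub
        (fun ω hω => hzero t ht ω hω.1 (fun hG => hω.2 ⟨hG, hω.1⟩))
    rw [hcongr]
    rw [prob_eq_ind]
    rw [tsum_subtype G (fun ω => if x ω < t then p ω else 0)]
    refine tsum_congr (fun ω => ?_)
    by_cases hω : ω ∈ G
    · rw [Set.indicator_of_mem hω]
      by_cases hxt : x ω < t
      · rw [if_pos hxt, Set.indicator_of_mem (show ω ∈ {ω | ω ∈ G ∧ x ω < t} from ⟨hω, hxt⟩)]
      · rw [if_neg hxt, Set.indicator_of_notMem (show ω ∉ {ω | ω ∈ G ∧ x ω < t} from fun h => hxt h.2)]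
    · rw [Set.indicator_of_notMem hω, Set.indicator_of_notMem (show ω ∉ {ω | ω ∈ G ∧ x ω < t} from fun h => hω h.1)]
  -- step 2 : swap sum and integral (finite sum)
  calc ∫ t in Set.Ioc 0 a, prob p {ω | x ω < t}
      = ∫ t in Set.Ioc 0 a, ∑ g : ↥G, (if x ↑g < t then p ↑g else 0) := by
        refine setIntegral_congr_fun measurableSet_Ioc (fun t ht => ?_)
        rw [hstep1 t ht, tsum_fintype]
    _ = ∑ g : ↥G, ∫ t in Set.Ioc 0 a, (if x ↑g < t then p ↑g else 0) := by
        refine integral_finset_sum _ (fun g _ => ?_)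
        have h1 : (fun t => if x ↑g < t then p ↑g else 0) =
            Set.indicator (Set.Ioi (x ↑g)) (fun _ => p ↑g) := by
          funext t
          simp only [Set.indicator_apply, Set.mem_Ioi]
        rw [h1]
        exact (integrable_const _).indicator measurableSet_Ioi
    _ = ∑ g : ↥G, p ↑g * (a - x ↑g) := by
        refine Finset.sum_congr rfl (fun g _ => ?_)
        have h1 : (fun t => if x ↑g < t then p ↑g else 0) =
            Set.indicator (Set.Ioi (x ↑g)) (fun _ => p ↑g) := by
          funext t
          simp only [Set.indicator_apply, Set.mem_Ioi]
        rw [h1, MeasureTheory.integral_indicator_const _ measurableSet_Ioi,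
          measureReal_def, Measure.restrict_apply measurableSet_Ioi]
        have hg := hx_mem ↑g g.2
        have hset : Set.Ioi (x ↑g) ∩ Set.Ioc 0 a = Set.Ioc (x ↑g) a := by
          ext t
          simp only [Set.mem_inter_iff, Set.mem_Ioi, Set.mem_Ioc]
          constructor
          · rintro ⟨h1', h2', h3'⟩; exact ⟨h1', h3'⟩
          · rintro ⟨h1', h2'⟩; exact ⟨h1', lt_of_le_of_lt hg.1 h1', h2'⟩
        rw [hset, Real.volume_Ioc, smul_eq_mul,
          ENNReal.toReal_ofReal (by linarith [hg.2]), mul_comm]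
    _ = ∑' g : ↥G, p ↑g * (a - x ↑g) := (tsum_fintype _).symm


open MeasureTheory

/-- if the normalized log-likelihood has a limiting distribution
function `F` and `lim p_n{-(1/n) log p_n < a} = 1 - ε`, then there is a sequence
of codes with rate `a`, error tending to `ε`, and normalized divergence from
uniform tending exactly to `∫_{[0,a]} (a - x) dμ_F`. -/
theorem normalized_KL_achievability
    (Ω : ℕ → Type) [∀ n, Countable (Ω n)]
    (p : ∀ n, Ω n → ℝ)
    (hnonneg : ∀ n ω, 0 ≤ p n ω)
    (hsum : ∀ n, HasSum (p n) 1)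
    (F : ℝ → ℝ) (hFmono : Monotone F) (hF01 : ∀ x, F x ∈ Set.Icc (0 : ℝ) 1)
    (hFlim : ∀ x : ℝ,
      Tendsto (fun n => prob (p n) {ω | -(1 / (n : ℝ)) * Real.log (p n ω) < x})
        atTop (nhds (F x)))
    (a : ℝ) (ε : ℝ) (hε0 : 0 < ε) (hε1 : ε < 1)
    (ha : Tendsto (fun n => prob (p n) {ω | -(1 / (n : ℝ)) * Real.log (p n ω) < a})
      atTop (nhds (1 - ε))) :
    ∃ (M : ℕ → ℕ) (φ : ∀ n, Ω n → Fin (M n)) (ψ : ∀ n, Fin (M n) → Ω n),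
      (∀ n, 0 < M n) ∧
      Tendsto (fun n => (Real.log (M n) / n : ℝ)) atTop (nhds a) ∧
      Tendsto (fun n => prob (p n) {ω | ψ n (φ n ω) ≠ ω}) atTop (nhds ε) ∧
      Tendsto (fun n => (KL (push (p n) (φ n)) (unif (M n)) / n : ℝ)) atTop
        (nhds (∫ x in Set.Icc 0 a, (a - x) ∂(hFmono.stieltjesFunction.measure))) := by
  classical
  have hple1 : ∀ n ω, p n ω ≤ 1 := fun n ω => le_hasSum (hsum n) ω (fun j _ => hnonneg n j)
  -- the sets in the statement are empty for x ≤ 0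
  have hSempty : ∀ (n : ℕ) (x : ℝ), x ≤ 0 →
      prob (p n) {ω | -(1 / (n : ℝ)) * Real.log (p n ω) < x} = 0 := by
    intro n x hx
    have h1 : {ω | -(1 / (n : ℝ)) * Real.log (p n ω) < x} = (∅ : Set (Ω n)) := by
      ext ω
      simp only [Set.mem_setOf_eq, Set.mem_empty_iff_false, iff_false, not_lt]
      have h2 : 0 ≤ -(1 / (n : ℝ)) * Real.log (p n ω) := by
        rcases eq_or_lt_of_le (hnonneg n ω) with h | h
        · rw [← h, Real.log_zero, mul_zero]
        · have hlog : Real.log (p n ω) ≤ 0 := Real.log_nonpos (hnonneg n ω) (hple1 n ω)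
          have hn : (0:ℝ) ≤ 1 / (n:ℝ) := by positivity
          nlinarith
      linarith
    rw [h1, prob_empty]
  have hF0 : ∀ x ≤ (0:ℝ), F x = 0 := by
    intro x hx
    refine tendsto_nhds_unique (hFlim x) ?_
    have : (fun n : ℕ => prob (p n) {ω | -(1 / (n : ℝ)) * Real.log (p n ω) < x})
        = fun _ => (0:ℝ) := funext fun n => hSempty n x hx
    rw [this]
    exact tendsto_const_nhds
  have hFa : F a = 1 - ε := tendsto_nhds_unique (hFlim a) ha
  have hapos : 0 < a := by
    by_contra h
    push_neg at h
    rw [hF0 a h] at hFa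
    linarith
  -- parameters
  set γ : ℕ → ℝ := fun n => Real.exp (-(n:ℝ) * a) with hγdef
  set K : ℕ → ℕ := fun n => ⌈Real.exp ((n:ℝ) * a)⌉₊ with hKdef
  have hγ0 : ∀ n, 0 < γ n := fun n => Real.exp_pos _
  have hγ1 : ∀ n, γ n ≤ 1 := by
    intro n
    rw [hγdef]
    simp only
    rw [Real.exp_le_one_iff]
    have : (0:ℝ) ≤ (n:ℝ) * a := by positivity
    linarith
  have hK0 : ∀ n, 0 < K n := fun n => Nat.ceil_pos.2 (Real.exp_pos _)
  have hγKinv : ∀ n, γ n * Real.exp ((n:ℝ) * a) = 1 := by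
    intro n
    rw [hγdef]
    simp only
    rw [← Real.exp_add]
    norm_num
  have hKγ1 : ∀ n, 1 ≤ (K n : ℝ) * γ n := by
    intro n
    have h1 : Real.exp ((n:ℝ) * a) ≤ (K n : ℝ) := Nat.le_ceil _
    have h2 := hγKinv n
    nlinarith [hγ0 n]
  have hKγ2 : ∀ n, (K n : ℝ) * γ n ≤ 2 := by
    intro n
    have h1 : (K n : ℝ) < Real.exp ((n:ℝ) * a) + 1 :=
      Nat.ceil_lt_add_one (le_of_lt (Real.exp_pos _))
    have h2 := hγKinv n
    nlinarith [hγ0 n, hγ1 n]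
  -- construct the codes
  have hcode : ∀ n, ∃ (φ : Ω n → Fin (K n + K n)) (ψ : Fin (K n + K n) → Ω n),
      (({ω | γ n < p n ω}).Nonempty → {ω | ψ (φ ω) ≠ ω} = {ω | γ n < p n ω}ᶜ) ∧
      |KL (push (p n) φ) (unif (K n + K n)) -
        ∑' g : {ω | γ n < p n ω}, p n g * Real.log (p n g * ((K n + K n : ℕ) : ℝ))| ≤
        Real.log 6 + 1 :=
    fun n => code_exists (p n) (hnonneg n) (hsum n) (γ n) (hγ0 n) (K n) (hK0 n)
      (hKγ1 n) (hKγ2 n)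
  choose φ ψ herr hkl using hcode
  -- rate limit
  have hrate : Tendsto (fun n : ℕ => (Real.log ((K n + K n : ℕ) : ℝ) / n : ℝ)) atTop (nhds a) := by
    have hub : Tendsto (fun n : ℕ => a + (2 * Real.log 2) / n) atTop (nhds a) := by
      have h0 : Tendsto (fun n : ℕ => (2 * Real.log 2) / n) atTop (nhds 0) :=
        tendsto_const_div_atTop_nhds_zero_nat _
      simpa using tendsto_const_nhds.add h0
    have hlog2 : (0:ℝ) ≤ Real.log 2 := Real.log_nonneg (by norm_num)
    have hKlb : ∀ n : ℕ, (n:ℝ) * a ≤ Real.log (K n) := by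
      intro n
      have h1 : Real.exp ((n:ℝ) * a) ≤ (K n : ℝ) := Nat.le_ceil _
      have := Real.log_le_log (Real.exp_pos _) h1
      rwa [Real.log_exp] at this
    have hKub : ∀ n : ℕ, Real.log (K n) ≤ Real.log 2 + (n:ℝ) * a := by
      intro n
      have hexp1 : (1:ℝ) ≤ Real.exp ((n:ℝ) * a) := by
        rw [Real.one_le_exp_iff]
        positivity
      have h1 : (K n : ℝ) ≤ 2 * Real.exp ((n:ℝ) * a) := by
        have := Nat.ceil_lt_add_one (le_of_lt (Real.exp_pos ((n:ℝ) * a)))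
        have h2 : (K n : ℝ) < Real.exp ((n:ℝ) * a) + 1 := this
        linarith
      have hKpos : (0:ℝ) < (K n : ℝ) := by exact_mod_cast hK0 n
      have := Real.log_le_log hKpos h1
      rwa [Real.log_mul two_ne_zero (ne_of_gt (Real.exp_pos _)), Real.log_exp] at this
    have hlogM : ∀ n : ℕ, Real.log ((K n + K n : ℕ) : ℝ) = Real.log 2 + Real.log (K n) := by
      intro n
      have h1 : ((K n + K n : ℕ) : ℝ) = 2 * (K n : ℝ) := by push_cast; ring
      have hKpos : (0:ℝ) < (K n : ℝ) := by exact_mod_cast hK0 n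
      rw [h1, Real.log_mul two_ne_zero (ne_of_gt hKpos)]
    refine tendsto_of_tendsto_of_tendsto_of_le_of_le' tendsto_const_nhds hub ?_ ?_
    · filter_upwards [eventually_ge_atTop 1] with n hn
      have hn0 : (0:ℝ) < (n:ℝ) := by exact_mod_cast hn
      rw [hlogM n, le_div_iff₀ hn0]
      have := hKlb n
      nlinarith
    · filter_upwards [eventually_ge_atTop 1] with n hn
      have hn0 : (0:ℝ) < (n:ℝ) := by exact_mod_cast hn
      rw [hlogM n, div_le_iff₀ hn0]
      have h1 := hKub n
      have h2 : (a + 2 * Real.log 2 / (n:ℝ)) * (n:ℝ) = a * n + 2 * Real.log 2 := by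
        field_simp
      rw [h2]
      nlinarith
  -- identification of prob G with prob S for n ≥ 1
  have hprobGS : ∀ n : ℕ, 1 ≤ n → prob (p n) {ω | γ n < p n ω} =
      prob (p n) {ω | -(1 / (n : ℝ)) * Real.log (p n ω) < a} := by
    intro n hn
    refine (prob_congr_zero (hsum n).summable ?_ ?_).symm
    · intro ω hω
      exact xlt_of_gt hn hω
    · rintro ω ⟨hω1, hω2⟩
      simp only [Set.mem_setOf_eq] at hω1 hω2
      exact eq_zero_of_xlt hn (hnonneg n ω) (not_lt.1 hω2) hω1
  -- eventually G is nonempty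
  have hGne : ∀ᶠ n in atTop, ({ω | γ n < p n ω}).Nonempty := by
    have h1 : ∀ᶠ n in atTop,
        0 < prob (p n) {ω | -(1 / (n : ℝ)) * Real.log (p n ω) < a} :=
      ha.eventually (eventually_gt_nhds (by linarith))
    filter_upwards [h1, eventually_ge_atTop 1] with n hpos hn
    rw [← hprobGS n hn] at hpos
    rw [Set.nonempty_iff_ne_empty]
    intro hemp
    rw [hemp, prob_empty] at hpos
    exact lt_irrefl 0 hpos
  refine ⟨fun n => K n + K n, φ, ψ, fun n => Nat.add_pos_left (hK0 n) (K n), hrate, ?_, ?_⟩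
  · -- error probability
    have h2 : Tendsto (fun n : ℕ =>
        1 - prob (p n) {ω | -(1 / (n : ℝ)) * Real.log (p n ω) < a}) atTop (nhds ε) := by
      have := tendsto_const_nhds (x := (1:ℝ)) (f := atTop (α := ℕ))
      have h3 := this.sub ha
      simpa using h3
    refine h2.congr' ?_
    filter_upwards [hGne, eventually_ge_atTop 1] with n hne hn
    rw [herr n hne, prob_compl (hsum n), hprobGS n hn]
  · -- divergence
    have hT : ∫ x in Set.Icc 0 a, (a - x) ∂(hFmono.stieltjesFunction.measure)
        = ∫ t in Set.Ioc 0 a, F t := stieltjes_eq hFmono hF01 hF0 hapos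
    rw [hT]
    haveI hfin2 : IsFiniteMeasure (volume.restrict (Set.Ioc (0:ℝ) a)) := by
      constructor
      rw [Measure.restrict_apply_univ, Real.volume_Ioc]
      exact ENNReal.ofReal_lt_top
    -- dominated convergence
    have hI : Tendsto (fun n : ℕ => ∫ t in Set.Ioc (0:ℝ) a,
        prob (p n) {ω | -(1 / (n : ℝ)) * Real.log (p n ω) < t}) atTop
        (nhds (∫ t in Set.Ioc (0:ℝ) a, F t)) := by
      refine MeasureTheory.tendsto_integral_of_dominated_convergence (fun _ => (1:ℝ))
        ?_ (MeasureTheory.integrable_const 1) ?_ ?_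
      · intro n
        have hmono : Monotone (fun t : ℝ =>
            prob (p n) {ω | -(1 / (n : ℝ)) * Real.log (p n ω) < t}) := by
          intro t t' htt'
          exact prob_mono (hnonneg n) (hsum n).summable
            (fun ω hω => lt_of_lt_of_le hω htt')
        exact (hmono.measurable.aestronglyMeasurable).restrict
      · intro n
        refine Filter.Eventually.of_forall (fun t => ?_)
        rw [Real.norm_eq_abs, abs_le]
        constructor
        · have := prob_nonneg (hnonneg n)
            {ω | -(1 / (n : ℝ)) * Real.log (p n ω) < t}
          linarith
        · exact prob_le_one (hnonneg n) (hsum n) _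
      · exact Filter.Eventually.of_forall (fun t => hFlim t)
    -- I(n) as a sum
    have hIlim : Tendsto (fun n : ℕ => ∑' g : {ω | γ n < p n ω},
        p n ↑g * (a - (-(1 / (n : ℝ)) * Real.log (p n ↑g)))) atTop
        (nhds (∫ t in Set.Ioc (0:ℝ) a, F t)) := by
      refine hI.congr' ?_
      filter_upwards [eventually_ge_atTop 1] with n hn
      exact int_rep (p n) (hnonneg n) (hsum n) hn hapos
    -- the vanishing correction term
    have hcorr : Tendsto (fun n : ℕ => (Real.log ((K n + K n : ℕ) : ℝ) / n - a) *
        prob (p n) {ω | γ n < p n ω}) atTop (nhds 0) := by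
      have h1 : Tendsto (fun n : ℕ => Real.log ((K n + K n : ℕ) : ℝ) / n - a) atTop
          (nhds 0) := by
        have := hrate.sub (tendsto_const_nhds (x := a) (f := atTop (α := ℕ)))
        simpa using this
      have h2 : Tendsto (fun n : ℕ => prob (p n) {ω | γ n < p n ω}) atTop
          (nhds (1 - ε)) := by
        refine ha.congr' ?_
        filter_upwards [eventually_ge_atTop 1] with n hn
        exact (hprobGS n hn).symm
      have := h1.mul h2
      simpa using this
    -- splitting of the good sum
    have hsplit : ∀ᶠ n : ℕ in atTop,
        (∑' g : {ω | γ n < p n ω}, p n ↑g *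
          Real.log (p n ↑g * ((K n + K n : ℕ) : ℝ))) / n
        = (∑' g : {ω | γ n < p n ω}, p n ↑g * (a - (-(1 / (n : ℝ)) * Real.log (p n ↑g))))
          + (Real.log ((K n + K n : ℕ) : ℝ) / n - a) * prob (p n) {ω | γ n < p n ω} := by
      filter_upwards [eventually_ge_atTop 1] with n hn
      have hn0 : (0:ℝ) < (n:ℝ) := by exact_mod_cast hn
      have hGfin : {ω | γ n < p n ω}.Finite := Gfinite (hsum n).summable (hγ0 n)
      haveI := hGfin.fintype
      have hprobdef : prob (p n) {ω | γ n < p n ω} =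
          ∑ g : ↥{ω | γ n < p n ω}, p n ↑g := tsum_fintype _
      rw [tsum_fintype, tsum_fintype, hprobdef, Finset.sum_div, Finset.mul_sum,
        ← Finset.sum_add_distrib]
      refine Finset.sum_congr rfl (fun g _ => ?_)
      have hppos : 0 < p n ↑g := lt_trans (hγ0 n) g.2
      have hMpos : (0:ℝ) < ((K n + K n : ℕ) : ℝ) := by
        have := Nat.add_pos_left (hK0 n) (K n)
        exact_mod_cast this
      rw [Real.log_mul (ne_of_gt hppos) (ne_of_gt hMpos)]
      field_simp
      ring
    -- good sum / n tends to the integral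
    have hgood : Tendsto (fun n : ℕ => (∑' g : {ω | γ n < p n ω}, p n ↑g *
        Real.log (p n ↑g * ((K n + K n : ℕ) : ℝ))) / n) atTop
        (nhds (∫ t in Set.Ioc (0:ℝ) a, F t)) := by
      have h1 := hIlim.add hcorr
      rw [add_zero] at h1
      exact h1.congr' (Filter.EventuallyEq.symm hsplit)
    -- remainder term tends to 0
    have hrem : Tendsto (fun n : ℕ => (KL (push (p n) (φ n)) (unif (K n + K n)) -
        ∑' g : {ω | γ n < p n ω}, p n ↑g *
          Real.log (p n ↑g * ((K n + K n : ℕ) : ℝ))) / n) atTop (nhds 0) := by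
      refine squeeze_zero_norm' ?_ (tendsto_const_div_atTop_nhds_zero_nat (Real.log 6 + 1))
      filter_upwards [eventually_ge_atTop 1] with n hn
      have hn0 : (0:ℝ) < (n:ℝ) := by exact_mod_cast hn
      rw [Real.norm_eq_abs, abs_div, abs_of_pos hn0]
      gcongr
      exact hkl n
    have hfinal := hgood.add hrem
    rw [add_zero] at hfinal
    refine hfinal.congr (fun n => ?_)
    rw [← add_div, add_sub_cancel]
end
end

section
/- Let p be a probability mass function on a countable set Ω, let M be a positive integer, and let φ : Ω → {1,…,M}. Set H(M,p) := −Σ_{ω : p(ω) > 1/M} p(ω) log p(ω) and q := p{ω : p(ω) ≤ 1/M}. Then the Shannon entropy of the push-forward distribution satisfies H(p∘φ⁻¹) ≤ H(M,p) + q·(log M − log q), where the last term is interpreted as 0 when q = 0. -/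
open Filter

noncomputable section

/-- Shannon entropy of a distribution on `Fin M`. -/
def entropyFin {M : ℕ} (q : Fin M → ℝ) : ℝ := -∑ i, q i * Real.log (q i)

lemma subadd_mul_log {a b : ℝ} (ha : 0 ≤ a) (hb : 0 ≤ b) :
    a * Real.log a + b * Real.log b ≤ (a + b) * Real.log (a + b) := by
  rcases eq_or_lt_of_le ha with h | h
  · simp [← h]
  rcases eq_or_lt_of_le hb with h' | h'
  · simp [← h']
  have h1 : a * Real.log a ≤ a * Real.log (a + b) :=
    mul_le_mul_of_nonneg_left (Real.log_le_log h (by linarith)) ha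
  have h2 : b * Real.log b ≤ b * Real.log (a + b) :=
    mul_le_mul_of_nonneg_left (Real.log_le_log h' (by linarith)) hb
  nlinarith

lemma gibbs {M : ℕ} (hM : 0 < M) (b : Fin M → ℝ) (hb : ∀ i, 0 ≤ b i) :
    -∑ i, b i * Real.log (b i) ≤ (∑ i, b i) * (Real.log M - Real.log (∑ i, b i)) := by
  set q := ∑ i, b i with hq
  have hq0 : 0 ≤ q := Finset.sum_nonneg fun i _ => hb i
  have hMpos : (0:ℝ) < M := Nat.cast_pos.mpr hM
  have key : ∀ i, b i * (Real.log q - Real.log M - Real.log (b i)) ≤ q / M - b i := by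
    intro i
    rcases eq_or_lt_of_le (hb i) with h | h
    · rw [← h]; simp; positivity
    · have hqpos : 0 < q :=
        lt_of_lt_of_le h (Finset.single_le_sum (fun j _ => hb j) (Finset.mem_univ i))
      have hx : (0:ℝ) < q / (M * b i) := by positivity
      have hle := Real.log_le_sub_one_of_pos hx
      have hlog : Real.log (q / (M * b i)) = Real.log q - Real.log M - Real.log (b i) := by
        rw [Real.log_div (by positivity) (by positivity),
            Real.log_mul (by positivity) (by positivity)]
        ring
      rw [hlog] at hle
      have := mul_le_mul_of_nonneg_left hle (le_of_lt h)
      calc b i * (Real.log q - Real.log M - Real.log (b i))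
          ≤ b i * (q / (M * b i) - 1) := this
        _ = q / M - b i := by field_simp
  have hsumle : ∑ i, b i * (Real.log q - Real.log M - Real.log (b i))
      ≤ ∑ i, (q / (M:ℝ) - b i) := Finset.sum_le_sum (fun i _ => key i)
  have hR : ∑ i, (q / (M:ℝ) - b i) = 0 := by
    rw [Finset.sum_sub_distrib, Finset.sum_const, Finset.card_univ, Fintype.card_fin]
    rw [nsmul_eq_mul, mul_div_cancel₀ _ hMpos.ne', sub_self]
  have hL : ∑ i, b i * (Real.log q - Real.log M - Real.log (b i))
      = q * (Real.log q - Real.log M) - ∑ i, b i * Real.log (b i) := by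
    simp only [mul_sub, Finset.sum_sub_distrib, ← Finset.sum_mul]
    rw [← hq]
  rw [hR, hL] at hsumle
  linarith

lemma merge_le {Ω : Type*} (g : Ω → ℝ) (hg : ∀ ω, 0 ≤ g ω)
    (hsum : Summable g) (hsum2 : Summable (fun ω => g ω * Real.log (g ω))) :
    ∑' ω, g ω * Real.log (g ω) ≤ (∑' ω, g ω) * Real.log (∑' ω, g ω) := by
  have hle : ∀ ω, g ω * Real.log (g ω) ≤ g ω * Real.log (∑' ω, g ω) := by
    intro ω
    rcases eq_or_lt_of_le (hg ω) with h | h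
    · rw [← h]; simp
    · exact mul_le_mul_of_nonneg_left
        (Real.log_le_log h (Summable.le_tsum hsum ω fun j _ => hg j)) (hg ω)
  calc ∑' ω, g ω * Real.log (g ω) ≤ ∑' ω, g ω * Real.log (∑' ω, g ω) :=
        Summable.tsum_le_tsum hle hsum2 (hsum.mul_right _)
    _ = (∑' ω, g ω) * Real.log (∑' ω, g ω) := tsum_mul_right

lemma sum_fiber_indicator {Ω : Type*} {M : ℕ} (φ : Ω → Fin M) (T : Set Ω) (h : Ω → ℝ)
    (ω : Ω) : ∑ i, ({ω' | φ ω' = i} ∩ T).indicator h ω = T.indicator h ω := by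
  rw [Finset.sum_eq_single (φ ω)]
  · by_cases hT : ω ∈ T <;> simp [Set.indicator_apply, hT]
  · intro i _ hne
    apply Set.indicator_of_notMem
    rintro ⟨h1, -⟩; exact hne h1.symm
  · simp

/-- the entropy of the push-forward of `p` under `φ : Ω → Fin M` is
at most `H(M,p) + q (log M - log q)` where `H(M,p)` sums `-p log p` over the
points with `p(ω) > 1/M` and `q = p{ω : p(ω) ≤ 1/M}`. -/
theorem entropy_pushforward_le
    (Ω : Type) [Countable Ω]
    (p : Ω → ℝ)
    (hnonneg : ∀ ω, 0 ≤ p ω)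
    (hsum : HasSum p 1)
    (M : ℕ) (hM : 0 < M)
    (φ : Ω → Fin M) :
    entropyFin (push p φ)
      ≤ (-∑' ω : {ω : Ω | p ω > 1 / (M : ℝ)}, p ω * Real.log (p ω))
        + prob p {ω | p ω ≤ 1 / (M : ℝ)} *
          (Real.log M - Real.log (prob p {ω | p ω ≤ 1 / (M : ℝ)})) := by
  have hp : Summable p := hsum.summable
  have hple1 : ∀ ω, p ω ≤ 1 := fun ω => le_hasSum hsum ω (fun j _ => hnonneg j)
  have hMpos : (0:ℝ) < M := Nat.cast_pos.mpr hM
  have hlogM : 0 ≤ Real.log M := Real.log_nonneg (by exact_mod_cast hM)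
  set c : ℝ := 1 / (M:ℝ) with hc
  have hcpos : 0 < c := by positivity
  set A : Set Ω := {ω | p ω > c} with hA
  set B : Set Ω := {ω | p ω ≤ c} with hB
  set S : Fin M → Set Ω := fun i => {ω | φ ω = i} with hS
  set f : Ω → ℝ := fun ω => -(p ω * Real.log (p ω)) with hf
  set a : Fin M → ℝ := fun i => ∑' ω, (S i ∩ A).indicator p ω with haDef
  set b : Fin M → ℝ := fun i => ∑' ω, (S i ∩ B).indicator p ω with hbDef
  -- bound on f over A
  have hfA_bound : ∀ ω, A.indicator f ω ≤ p ω * Real.log M := by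
    intro ω
    by_cases h : ω ∈ A
    · rw [Set.indicator_of_mem h]
      have hpω : c < p ω := h
      have hl : -Real.log (p ω) ≤ Real.log M := by
        have h1 : Real.log c < Real.log (p ω) := Real.log_lt_log hcpos hpω
        have h2 : Real.log c = -Real.log M := by
          rw [hc, Real.log_div one_ne_zero (ne_of_gt hMpos), Real.log_one]; ring
        linarith
      have := mul_le_mul_of_nonneg_left hl (hnonneg ω)
      simp only [hf]; linarith
    · rw [Set.indicator_of_notMem h]
      exact mul_nonneg (hnonneg ω) hlogM
  have hfA_nonneg : ∀ ω, 0 ≤ A.indicator f ω := by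
    intro ω
    by_cases h : ω ∈ A
    · rw [Set.indicator_of_mem h]
      have h1 : Real.log (p ω) ≤ 0 := Real.log_nonpos (hnonneg ω) (hple1 ω)
      have := mul_nonpos_of_nonneg_of_nonpos (hnonneg ω) h1
      simp only [hf]; linarith
    · rw [Set.indicator_of_notMem h]
  have hfA : Summable (A.indicator f) :=
    Summable.of_nonneg_of_le hfA_nonneg hfA_bound (hp.mul_right _)
  have hSA_sub : ∀ i, Summable ((S i ∩ A).indicator f) := by
    intro i
    have heq : (S i ∩ A).indicator f = (S i ∩ A).indicator (A.indicator f) := by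
      rw [Set.indicator_indicator, Set.inter_assoc, Set.inter_self]
    rw [heq]
    exact hfA.indicator _
  have ha_nonneg : ∀ i, 0 ≤ a i := fun i =>
    tsum_nonneg fun ω => Set.indicator_nonneg (fun ω _ => hnonneg ω) ω
  have hb_nonneg : ∀ i, 0 ≤ b i := fun i =>
    tsum_nonneg fun ω => Set.indicator_nonneg (fun ω _ => hnonneg ω) ω
  -- push = a + b
  have push_eq : ∀ i, push p φ i = a i + b i := by
    intro i
    have hpt : ∀ ω, (S i).indicator p ω
        = (S i ∩ A).indicator p ω + (S i ∩ B).indicator p ω := by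
      intro ω
      by_cases hω : ω ∈ S i
      · rcases le_or_gt (p ω) c with hle | hlt
        · have h1 : ω ∉ S i ∩ A := by rintro ⟨-, h2⟩; exact absurd hle (not_le.mpr h2)
          have h2 : ω ∈ S i ∩ B := ⟨hω, hle⟩
          rw [Set.indicator_of_mem hω, Set.indicator_of_notMem h1, Set.indicator_of_mem h2]
          ring
        · have h1 : ω ∈ S i ∩ A := ⟨hω, hlt⟩
          have h2 : ω ∉ S i ∩ B := by rintro ⟨-, h3⟩; exact absurd h3 (not_le.mpr hlt)
          rw [Set.indicator_of_mem hω, Set.indicator_of_mem h1, Set.indicator_of_notMem h2]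
          ring
      · have h1 : ω ∉ S i ∩ A := fun h => hω h.1
        have h2 : ω ∉ S i ∩ B := fun h => hω h.1
        rw [Set.indicator_of_notMem hω, Set.indicator_of_notMem h1,
            Set.indicator_of_notMem h2]
        ring
    have hpush : push p φ i = ∑' ω, (S i).indicator p ω := by
      rw [push, prob, tsum_subtype]
    rw [hpush, tsum_congr hpt, Summable.tsum_add (hp.indicator _) (hp.indicator _)]
  -- per-fiber bound for a
  have stepA : ∀ i, -(a i * Real.log (a i)) ≤ ∑' ω, (S i ∩ A).indicator f ω := by
    intro i
    have hgnn : ∀ ω, 0 ≤ (S i ∩ A).indicator p ω := fun ω =>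
      Set.indicator_nonneg (fun ω _ => hnonneg ω) ω
    have heq : (fun ω => (S i ∩ A).indicator p ω * Real.log ((S i ∩ A).indicator p ω))
        = fun ω => -((S i ∩ A).indicator f ω) := by
      funext ω
      by_cases h : ω ∈ S i ∩ A
      · rw [Set.indicator_of_mem h, Set.indicator_of_mem h, hf]; ring
      · rw [Set.indicator_of_notMem h, Set.indicator_of_notMem h]; simp
    have hgsum2 : Summable
        (fun ω => (S i ∩ A).indicator p ω * Real.log ((S i ∩ A).indicator p ω)) := by
      rw [heq]; exact (hSA_sub i).neg
    have hm := merge_le _ hgnn (hp.indicator _) hgsum2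
    rw [heq, tsum_neg] at hm
    have haeq : a i = ∑' ω, (S i ∩ A).indicator p ω := rfl
    rw [← haeq] at hm
    linarith
  -- sum over i of the A-parts
  have sumA : ∑ i, ∑' ω, (S i ∩ A).indicator f ω
      = -∑' ω : A, p ω * Real.log (p ω) := by
    rw [← Summable.tsum_finsetSum (fun i _ => hSA_sub i)]
    rw [tsum_congr (fun ω => sum_fiber_indicator φ A f ω), ← tsum_subtype]
    simp only [hf]
    rw [tsum_neg]
  -- sum over i of b equals prob B
  have sumB : ∑ i, b i = prob p B := by
    simp only [hbDef]
    rw [← Summable.tsum_finsetSum (fun i _ => hp.indicator _)]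
    rw [tsum_congr (fun ω => sum_fiber_indicator φ B p ω), ← tsum_subtype]
    rfl
  -- combine
  have h1 : ∑ i, (a i * Real.log (a i) + b i * Real.log (b i))
      ≤ ∑ i, (a i + b i) * Real.log (a i + b i) :=
    Finset.sum_le_sum fun i _ => subadd_mul_log (ha_nonneg i) (hb_nonneg i)
  have hsplit : ∑ i, (a i * Real.log (a i) + b i * Real.log (b i))
      = ∑ i, a i * Real.log (a i) + ∑ i, b i * Real.log (b i) :=
    Finset.sum_add_distrib
  have hA2 : -∑ i, a i * Real.log (a i) ≤ -∑' ω : A, p ω * Real.log (p ω) := by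
    rw [← sumA, ← Finset.sum_neg_distrib]
    exact Finset.sum_le_sum fun i _ => stepA i
  have hB2 : -∑ i, b i * Real.log (b i)
      ≤ prob p B * (Real.log M - Real.log (prob p B)) := by
    rw [← sumB]
    exact gibbs hM b hb_nonneg
  unfold entropyFin
  simp only [push_eq]
  linarith
end
end
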